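/- For the surface of revolution r(u,v) = (u sinh v, u cosh v, f(u)), u > 0, with f twice differentiable, the induced Laplace operator satisfies Δr₁ = 0, Δr₂ = 0 and Δr₃ = −f''(u) − f'(u)/u, where r₁(u,v) = u sinh v, r₂(u,v) = u cosh v, r₃(u,v) = f(u). -/

import Mathlib

/-- The Laplace operator of the first fundamental form of the surface of revolution
`r(u,v) = (u sinh v, u cosh v, f(u))` in the semi-isotropic space, where `E = −1`,
`F = 0`, `G = u²` and `W = EG − F² = −u²`, following the general formula
`Δψ = −(1/√|W|)[∂_u((Gψ_u − Fψ_v)/√|W|) − ∂_v((Fψ_u − Eψ_v)/√|W|)]`. -/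
noncomputable def lapI (ψ : ℝ → ℝ → ℝ) (u v : ℝ) : ℝ :=
  -(1 / Real.sqrt |(-1 : ℝ) * u ^ 2 - 0 ^ 2|) *
    (deriv (fun t =>
        (t ^ 2 * deriv (fun s => ψ s v) t - 0 * deriv (fun s => ψ t s) v) /
          Real.sqrt |(-1 : ℝ) * t ^ 2 - 0 ^ 2|) u
      - deriv (fun w =>
        (0 * deriv (fun s => ψ s w) u - (-1 : ℝ) * deriv (fun s => ψ u s) w) /
          Real.sqrt |(-1 : ℝ) * u ^ 2 - 0 ^ 2|) v)

lemma sqrt_abs_neg_one_mul_sq_sub_zero_sq (t : ℝ) : √|(-1 : ℝ) * t ^ 2 - 0 ^ 2| = |t| := by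
  rw [show (-1 : ℝ) * t ^ 2 - 0 ^ 2 = -(t ^ 2) by ring, abs_neg, abs_sq, Real.sqrt_sq_eq_abs]

theorem lapI_eq_of_pos {ψ : ℝ → ℝ → ℝ} {u v : ℝ} (hu : 0 < u)
    (hψ : DifferentiableAt ℝ (deriv (ψ · v)) u) :
    lapI ψ u v =
      -deriv (deriv (ψ · v)) u - deriv (ψ · v) u / u + deriv (deriv (ψ u ·)) v / u ^ 2 := by
  have radial : (fun t => (t ^ 2 * deriv (fun s => ψ s v) t - 0 * deriv (fun s => ψ t s) v) /
      √|(-1 : ℝ) * t ^ 2 - 0 ^ 2|) =ᶠ[nhds u] fun t => t * deriv (fun s => ψ s v) t := by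
    filter_upwards [Ioi_mem_nhds hu] with t (ht : 0 < t)
    rw [sqrt_abs_neg_one_mul_sq_sub_zero_sq, abs_of_pos ht]
    field_simp
    ring
  have angular :
      (fun w => (0 * deriv (fun s => ψ s w) u - (-1 : ℝ) * deriv (fun s => ψ u s) w) /
        √|(-1 : ℝ) * u ^ 2 - 0 ^ 2|) = fun w => deriv (fun s => ψ u s) w / u := by
    funext w
    rw [sqrt_abs_neg_one_mul_sq_sub_zero_sq, abs_of_pos hu]
    ring
  rw [lapI, radial.deriv_eq, angular, deriv_div_const, deriv_fun_mul differentiableAt_fun_id hψ,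
    deriv_id'', sqrt_abs_neg_one_mul_sq_sub_zero_sq, abs_of_pos hu]
  field_simp
  ring

theorem surface_of_revolution_laplacian
    (f : ℝ → ℝ)
    (hf' : ∀ u ∈ Set.Ioi (0 : ℝ), DifferentiableAt ℝ (deriv f) u)
    (u v : ℝ) (hu : 0 < u) :
    lapI (fun u v => u * Real.sinh v) u v = 0 ∧
    lapI (fun u v => u * Real.cosh v) u v = 0 ∧
    lapI (fun u _ => f u) u v = -(deriv (deriv f) u) - deriv f u / u := by
  refine ⟨?_, ?_, ?_⟩
  · rw [lapI_eq_of_pos hu (by simp)]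
    simp only [deriv_mul_const_field', deriv_const_mul_field', deriv_id'', one_mul, deriv_const',
      Real.deriv_sinh, Real.deriv_cosh]
    field_simp
    ring
  · rw [lapI_eq_of_pos hu (by simp)]
    simp only [deriv_mul_const_field', deriv_const_mul_field', deriv_id'', one_mul, deriv_const',
      Real.deriv_sinh, Real.deriv_cosh]
    field_simp
    ring
  · rw [lapI_eq_of_pos (ψ := fun u _ => f u) hu (hf' u hu)]
    simp
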